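/- arXiv:1403.3998 — 3 statements merged into one kernel-verified Lean document; each statement's English description precedes it below -/
import Mathlib

section
/- Let Q and P be positive integers with P ≤ Q, and let y : Fin Q → ℝ satisfy 0 ≤ y q ≤ 1 for all q and ∑ q, y q ≥ P. Then at least P of the entries of y are greater than or equal to 1/(Q - P + 1); that is, the cardinality of {q : y q ≥ 1/(Q - P + 1)} is at least P. -/
/-!
If only `k < P` entries reach `t = 1/(Q - P + 1)`, then, the entries being at most `1`, the sum is
strictly less than `k + t (Q - k)`, and `Q - k ≤ (P - k)(Q - P + 1)` because `P - k ≥ 1`;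
so the sum would be below `P`.
-/

open Finset

theorem Finset.sum_lt_card_filter_le_add_mul {ι : Type*} (s : Finset ι) (y : ι → ℝ) (t : ℝ)
    (hy : ∀ i ∈ s, y i ≤ 1) (hlt : ∃ i ∈ s, y i < t) :
    ∑ i ∈ s, y i < #{i ∈ s | t ≤ y i} + t * (#s - #{i ∈ s | t ≤ y i}) := by
  have hcard : (#s : ℝ) - #{i ∈ s | t ≤ y i} = #{i ∈ s | ¬ t ≤ y i} := by
    rw [sub_eq_iff_eq_add', ← Nat.cast_add, card_filter_add_card_filter_not]
  have hhigh : ∑ i ∈ s with t ≤ y i, y i ≤ #{i ∈ s | t ≤ y i} := by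
    simpa using sum_le_card_nsmul _ y 1 fun i hi => hy i (mem_filter.1 hi).1
  have hlow : ∑ i ∈ s with ¬ t ≤ y i, y i < t * #{i ∈ s | ¬ t ≤ y i} := by
    obtain ⟨i, hi, hyi⟩ := hlt
    calc ∑ i ∈ s with ¬ t ≤ y i, y i
        < ∑ i ∈ s with ¬ t ≤ y i, t :=
          sum_lt_sum_of_nonempty ⟨i, mem_filter.2 ⟨hi, not_le.2 hyi⟩⟩
            fun j hj => not_le.1 (mem_filter.1 hj).2
      _ = t * #{i ∈ s | ¬ t ≤ y i} := by rw [sum_const, nsmul_eq_mul, mul_comm]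
  rw [← sum_filter_add_sum_filter_not s (fun i => t ≤ y i), hcard]
  exact add_lt_add_of_le_of_lt hhigh hlow

theorem natCast_add_sub_mul_inv_le {Q P k : ℕ} (hkP : k < P) (hPQ : P ≤ Q) :
    (k : ℝ) + 1 / ((Q : ℝ) - P + 1) * (Q - k) ≤ P := by
  have hkP' : (k : ℝ) + 1 ≤ P := by exact_mod_cast hkP
  have hPQ' : (P : ℝ) ≤ Q := by exact_mod_cast hPQ
  rw [← le_sub_iff_add_le', one_div_mul_eq_div, div_le_iff₀ (by linarith)]
  nlinarith

theorem stmt_0_general (Q P : ℕ) (hPQ : P ≤ Q)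
    (y : Fin Q → ℝ) (hy : ∀ q, 0 ≤ y q ∧ y q ≤ 1)
    (hsum : (P : ℝ) ≤ ∑ q, y q) :
    P ≤ (Finset.univ.filter (fun q => 1 / ((Q : ℝ) - P + 1) ≤ y q)).card := by
  set t : ℝ := 1 / ((Q : ℝ) - P + 1)
  by_contra! hfew
  have hlt : ∃ q ∈ univ, y q < t := by
    by_contra! hall
    rw [filter_true_of_mem hall, card_univ, Fintype.card_fin] at hfew
    omega
  have := sum_lt_card_filter_le_add_mul univ y t (fun q _ => (hy q).2) hlt
  rw [card_univ, Fintype.card_fin] at this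
  linarith [natCast_add_sub_mul_inv_le hfew hPQ]

theorem stmt_0 (Q P : ℕ) (hQ : 0 < Q) (hP : 0 < P) (hPQ : P ≤ Q)
    (y : Fin Q → ℝ) (hy : ∀ q, 0 ≤ y q ∧ y q ≤ 1)
    (hsum : (P : ℝ) ≤ ∑ q, y q) :
    P ≤ (Finset.univ.filter (fun q => 1 / ((Q : ℝ) - P + 1) ≤ y q)).card :=
  stmt_0_general Q P hPQ y hy hsum
end

section
/- Let ξ₁, ξ₂ ∈ ℂ^N, let I ⊆ {1,…,M} with I and its complement nonempty, let H_i = h_i h_iᴴ, and suppose (ξ₁ᴴ H_i ξ₁).re ≥ 1/α for all i ∈ I and (ξ₂ᴴ H_i ξ₂).re ≥ 1/α for all i ∉ I, where α > 0. Suppose also ‖ξ₁‖² + ‖ξ₂‖² ≤ 3 s for some s ≥ 0. Define t₁² = max_{i∈I} 1/(ξ₁ᴴ H_i ξ₁).re, t₂² = max_{i∉I} 1/(ξ₂ᴴ H_i ξ₂).re, and x₁ = t₁ ξ₁, x₂ = t₂ ξ₂. Then x₁, x₂ together with β_i = 1 for i ∈ I and β_i = 0 otherwise are feasible for (P1), and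 ‖x₁‖² + ‖x₂‖² ≤ 3 α s. -/
/-!
Scaling by a real `t` multiplies every quadratic form and every squared norm by `t ^ 2`.
Taking `t_q ^ 2` to be the largest reciprocal form value over its block makes every constraint
of that block hold with value at least `1`, while the lower bound `1 / α` on the form values
bounds `t_q ^ 2` by `α`; the forms `h hᴴ` are positive semidefinite, so the constraints with
right-hand side `0` hold trivially.
-/

open Matrix ComplexOrder

theorem re_star_dotProduct_mulVec_ofReal_smul {𝕜 n : Type*} [RCLike 𝕜] [Fintype n]
    (A : Matrix n n 𝕜) (x : n → 𝕜) (t : ℝ) :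
    RCLike.re (star ((t : 𝕜) • x) ⬝ᵥ A *ᵥ ((t : 𝕜) • x)) =
      t ^ 2 * RCLike.re (star x ⬝ᵥ A *ᵥ x) := by
  rw [star_smul, RCLike.star_def, RCLike.conj_ofReal, mulVec_smul, smul_dotProduct,
    dotProduct_smul, smul_eq_mul, smul_eq_mul, ← mul_assoc, ← RCLike.ofReal_mul,
    RCLike.re_ofReal_mul, sq]

theorem sum_norm_ofReal_smul_sq {𝕜 n : Type*} [RCLike 𝕜] [Fintype n] (x : n → 𝕜) (t : ℝ) :
    ∑ j, ‖((t : 𝕜) • x) j‖ ^ 2 = t ^ 2 * ∑ j, ‖x j‖ ^ 2 := by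
  simp only [Pi.smul_apply, norm_smul, RCLike.norm_ofReal, mul_pow, sq_abs, Finset.mul_sum]

section

variable {ι : Type*} {S : Finset ι} (hS : S.Nonempty) {q : ι → ℝ} {α : ℝ}

theorem Finset.sup'_one_div_le (hα : 0 < α) (hq : ∀ i ∈ S, 1 / α ≤ q i) :
    S.sup' hS (fun i => 1 / q i) ≤ α :=
  Finset.sup'_le hS _ fun i hi => by
    simpa using one_div_le_one_div_of_le (one_div_pos.mpr hα) (hq i hi)

theorem Finset.one_le_sup'_one_div_mul {i : ι} (hi : i ∈ S) (hqi : 0 < q i) :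
    1 ≤ S.sup' hS (fun i => 1 / q i) * q i :=
  calc 1 = 1 / q i * q i := by field_simp
    _ ≤ S.sup' hS (fun i => 1 / q i) * q i :=
      mul_le_mul_of_nonneg_right (Finset.le_sup' (fun i => 1 / q i) hi) hqi.le

theorem Finset.sq_sqrt_sup'_one_div (hα : 0 < α) (hq : ∀ i ∈ S, 1 / α ≤ q i) :
    √(S.sup' hS fun i => 1 / q i) ^ 2 = S.sup' hS fun i => 1 / q i := by
  obtain ⟨i, hi⟩ := hS
  have hqi : 0 ≤ q i := (by positivity : 0 ≤ 1 / α).trans (hq i hi)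
  exact Real.sq_sqrt (Finset.le_sup'_of_le _ hi (one_div_nonneg.mpr hqi))

end

theorem stmt_16_general (N M : ℕ)
    (h : Fin M → Fin N → ℂ)
    (H : Fin M → Matrix (Fin N) (Fin N) ℂ)
    (hH : ∀ i, H i = Matrix.vecMulVec (h i) (star (h i)))
    (ξ₁ ξ₂ : Fin N → ℂ) (I : Finset (Fin M))
    (hI : I.Nonempty) (hIc : Iᶜ.Nonempty)
    (α s : ℝ) (hα : 0 < α)
    (h1 : ∀ i ∈ I, 1 / α ≤ (star ξ₁ ⬝ᵥ (H i).mulVec ξ₁).re)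
    (h2 : ∀ i ∉ I, 1 / α ≤ (star ξ₂ ⬝ᵥ (H i).mulVec ξ₂).re)
    (hnorm : (∑ j, ‖ξ₁ j‖ ^ 2) + (∑ j, ‖ξ₂ j‖ ^ 2) ≤ 3 * s)
    (t₁ t₂ : ℝ)
    (ht₁ : t₁ = Real.sqrt (I.sup' hI fun i => 1 / (star ξ₁ ⬝ᵥ (H i).mulVec ξ₁).re))
    (ht₂ : t₂ = Real.sqrt (Iᶜ.sup' hIc fun i => 1 / (star ξ₂ ⬝ᵥ (H i).mulVec ξ₂).re))
    (x₁ x₂ : Fin N → ℂ)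
    (hx₁ : x₁ = (t₁ : ℂ) • ξ₁) (hx₂ : x₂ = (t₂ : ℂ) • ξ₂) :
    (∀ i, (if i ∈ I then (1 : ℝ) else 0) ≤ (star x₁ ⬝ᵥ (H i).mulVec x₁).re) ∧
    (∀ i, 1 - (if i ∈ I then (1 : ℝ) else 0) ≤ (star x₂ ⬝ᵥ (H i).mulVec x₂).re) ∧
    (∑ j, ‖x₁ j‖ ^ 2) + (∑ j, ‖x₂ j‖ ^ 2) ≤ 3 * α * s := by
  have h2' : ∀ i ∈ Iᶜ, 1 / α ≤ (star ξ₂ ⬝ᵥ (H i).mulVec ξ₂).re := fun i hi =>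
    h2 i (Finset.mem_compl.mp hi)
  have ht₁sq := ht₁ ▸ Finset.sq_sqrt_sup'_one_div hI hα h1
  have ht₂sq := ht₂ ▸ Finset.sq_sqrt_sup'_one_div hIc hα h2'
  have hform_nonneg : ∀ i x, 0 ≤ (star x ⬝ᵥ (H i).mulVec x).re := fun i x =>
    (Complex.nonneg_iff.mp
      ((hH i ▸ posSemidef_vecMulVec_self_star (h i)).dotProduct_mulVec_nonneg x)).1
  have hform_pos : ∀ {x i}, 1 / α ≤ (star x ⬝ᵥ (H i).mulVec x).re →
      0 < (star x ⬝ᵥ (H i).mulVec x).re := fun hx => lt_of_lt_of_le (by positivity) hx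
  have hform_smul : ∀ (t : ℝ) x i, (star ((t : ℂ) • x) ⬝ᵥ (H i).mulVec ((t : ℂ) • x)).re =
      t ^ 2 * (star x ⬝ᵥ (H i).mulVec x).re := fun t x i =>
    re_star_dotProduct_mulVec_ofReal_smul (H i) x t
  subst hx₁ hx₂
  simp only [hform_smul]
  refine ⟨fun i => ?_, fun i => ?_, ?_⟩
  · split_ifs with hi
    · exact ht₁sq ▸ Finset.one_le_sup'_one_div_mul hI hi (hform_pos (h1 i hi))
    · exact mul_nonneg (sq_nonneg t₁) (hform_nonneg i ξ₁)
  · split_ifs with hi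
    · simpa using mul_nonneg (sq_nonneg t₂) (hform_nonneg i ξ₂)
    · simpa [ht₂sq] using
        Finset.one_le_sup'_one_div_mul hIc (Finset.mem_compl.mpr hi) (hform_pos (h2 i hi))
  · have ht₁α : t₁ ^ 2 ≤ α := ht₁sq ▸ Finset.sup'_one_div_le hI hα h1
    have ht₂α : t₂ ^ 2 ≤ α := ht₂sq ▸ Finset.sup'_one_div_le hIc hα h2'
    calc _ = t₁ ^ 2 * ∑ j, ‖ξ₁ j‖ ^ 2 + t₂ ^ 2 * ∑ j, ‖ξ₂ j‖ ^ 2 :=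
          congrArg₂ (· + ·) (sum_norm_ofReal_smul_sq ξ₁ t₁) (sum_norm_ofReal_smul_sq ξ₂ t₂)
      _ ≤ α * ((∑ j, ‖ξ₁ j‖ ^ 2) + ∑ j, ‖ξ₂ j‖ ^ 2) := by rw [mul_add]; gcongr
      _ ≤ 3 * α * s := by linarith [mul_le_mul_of_nonneg_left hnorm hα.le]

theorem stmt_16 (N M : ℕ)
    (h : Fin M → Fin N → ℂ)
    (H : Fin M → Matrix (Fin N) (Fin N) ℂ)
    (hH : ∀ i, H i = Matrix.vecMulVec (h i) (star (h i)))
    (ξ₁ ξ₂ : Fin N → ℂ) (I : Finset (Fin M))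
    (hI : I.Nonempty) (hIc : Iᶜ.Nonempty)
    (α s : ℝ) (hα : 0 < α) (hs : 0 ≤ s)
    (h1 : ∀ i ∈ I, 1 / α ≤ (star ξ₁ ⬝ᵥ (H i).mulVec ξ₁).re)
    (h2 : ∀ i ∉ I, 1 / α ≤ (star ξ₂ ⬝ᵥ (H i).mulVec ξ₂).re)
    (hnorm : (∑ j, ‖ξ₁ j‖ ^ 2) + (∑ j, ‖ξ₂ j‖ ^ 2) ≤ 3 * s)
    (t₁ t₂ : ℝ)
    (ht₁ : t₁ = Real.sqrt (I.sup' hI fun i => 1 / (star ξ₁ ⬝ᵥ (H i).mulVec ξ₁).re))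
    (ht₂ : t₂ = Real.sqrt (Iᶜ.sup' hIc fun i => 1 / (star ξ₂ ⬝ᵥ (H i).mulVec ξ₂).re))
    (x₁ x₂ : Fin N → ℂ)
    (hx₁ : x₁ = (t₁ : ℂ) • ξ₁) (hx₂ : x₂ = (t₂ : ℂ) • ξ₂) :
    (∀ i, (if i ∈ I then (1 : ℝ) else 0) ≤ (star x₁ ⬝ᵥ (H i).mulVec x₁).re) ∧
    (∀ i, 1 - (if i ∈ I then (1 : ℝ) else 0) ≤ (star x₂ ⬝ᵥ (H i).mulVec x₂).re) ∧
    (∑ j, ‖x₁ j‖ ^ 2) + (∑ j, ‖x₂ j‖ ^ 2) ≤ 3 * α * s :=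
  stmt_16_general N M h H hH ξ₁ ξ₂ I hI hIc α s hα h1 h2 hnorm t₁ t₂ ht₁ ht₂ x₁ x₂ hx₁ hx₂
end

section
/- Let Q, P be integers with 1 ≤ P ≤ Q, let y : Fin Q → ℝ with 0 ≤ y q ≤ 1 and ∑ q, y q ≥ P, and let 𝒫 ⊆ Fin Q be any set of P indices on which y attains its P largest values (i.e., |𝒫| = P and y q ≥ y q' for all q ∈ 𝒫, q' ∉ 𝒫). Then y q ≥ 1/(Q - P + 1) for every q ∈ 𝒫. -/
/-!
Fix `q` in the top set `s`. The other `#s - 1` members of `s` carry mass at most `1` each and the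
`|ι| - #s` elements outside `s` at most `y q` each, so `#s ≤ ∑ y ≤ (|ι| - #s + 1) * y q + #s - 1`.
-/

open Finset

section TopValues

variable {ι K : Type*} [DecidableEq ι] [Field K] [LinearOrder K]
  [IsStrictOrderedRing K] {y : ι → K} {s : Finset ι} {q : ι}

lemma sum_le_add_card_sub_one_of_le_one (hq : q ∈ s) (hy : ∀ x ∈ s, y x ≤ 1) :
    ∑ x ∈ s, y x ≤ y q + (#s - 1 : K) := by
  have hrest : ∑ x ∈ s.erase q, y x ≤ #(s.erase q) • (1 : K) :=
    sum_le_card_nsmul _ _ _ fun x hx => hy x (mem_of_mem_erase hx)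
  rw [card_erase_of_mem hq, nsmul_one, Nat.cast_pred (card_pos.mpr ⟨q, hq⟩)] at hrest
  rw [← sum_erase_add s y hq]
  linarith

lemma sum_compl_le_card_mul [Fintype ι] (htop : ∀ x ∉ s, y x ≤ y q) :
    ∑ x ∈ sᶜ, y x ≤ (Fintype.card ι - #s : K) * y q := by
  have h := sum_le_card_nsmul sᶜ y (y q) fun x hx => htop x (mem_compl.mp hx)
  rwa [nsmul_eq_mul, card_compl, Nat.cast_sub s.card_le_univ] at h

theorem one_div_le_of_mem_top [Fintype ι] (hy : ∀ x, y x ≤ 1) (hsum : (#s : K) ≤ ∑ x, y x)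
    (hq : q ∈ s) (htop : ∀ x ∉ s, y x ≤ y q) : 1 / (Fintype.card ι - #s + 1 : K) ≤ y q := by
  have hpos : (0 : K) < Fintype.card ι - #s + 1 := by
    have : (#s : K) ≤ Fintype.card ι := by exact_mod_cast s.card_le_univ
    linarith
  have hin := sum_le_add_card_sub_one_of_le_one hq fun x _ => hy x
  have hout := sum_compl_le_card_mul htop
  rw [← sum_add_sum_compl s y] at hsum
  rw [div_le_iff₀ hpos]
  linarith

end TopValues

theorem stmt_18_general (Q P : ℕ)
    (y : Fin Q → ℝ) (hy : ∀ q, 0 ≤ y q ∧ y q ≤ 1)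
    (hsum : (P : ℝ) ≤ ∑ q, y q)
    (Pset : Finset (Fin Q)) (hcard : Pset.card = P)
    (htop : ∀ q ∈ Pset, ∀ q' ∉ Pset, y q' ≤ y q) :
    ∀ q ∈ Pset, 1 / ((Q : ℝ) - P + 1) ≤ y q := by
  intro q hq
  subst hcard
  simpa using one_div_le_of_mem_top (fun x => (hy x).2) hsum hq (htop q hq)

theorem stmt_18 (Q P : ℕ) (hP : 1 ≤ P) (hPQ : P ≤ Q)
    (y : Fin Q → ℝ) (hy : ∀ q, 0 ≤ y q ∧ y q ≤ 1)
    (hsum : (P : ℝ) ≤ ∑ q, y q)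
    (Pset : Finset (Fin Q)) (hcard : Pset.card = P)
    (htop : ∀ q ∈ Pset, ∀ q' ∉ Pset, y q' ≤ y q) :
    ∀ q ∈ Pset, 1 / ((Q : ℝ) - P + 1) ≤ y q :=
  stmt_18_general Q P y hy hsum Pset hcard htop
end
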